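/- arXiv:0802.2544 — 7 statements merged into one kernel-verified Lean document; each statement's English description precedes it below -/
import Mathlib

section
/- For every t ∈ ℝ there exist a constant c ∈ ℝ and a derivation D of the Lie algebra (ℝ⁹, μ_t) such that the Ricci operator satisfies Ric_{μ_t} = c·I + D (i.e., the canonical inner product is a nilsoliton metric on n_t = (ℝ⁹, μ_t), so n_t is an Einstein nilradical). -/
open Matrix Finset Real Filter

noncomputable section

/-- The canonical basis vector `eᵢ` of `ℝ⁹` (0-indexed: `e 0 = e₁`, …, `e 8 = e₉`). -/
def e (i : Fin 9) : Fin 9 → ℝ := Pi.single i 1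

/-- Half of the structure constants of `μ_t` (before antisymmetrization):
`μ_t(e₅,e₄)=e₇, μ_t(e₁,e₆)=e₈, μ_t(e₃,e₂)=e₉, μ_t(e₃,e₆)=t e₇, μ_t(e₅,e₂)=t e₈, μ_t(e₁,e₄)=t e₉`. -/
def muHalf (t : ℝ) (i j k : Fin 9) : ℝ :=
  (if i = 4 ∧ j = 3 ∧ k = 6 then (1:ℝ) else 0) +
  (if i = 0 ∧ j = 5 ∧ k = 7 then (1:ℝ) else 0) +
  (if i = 2 ∧ j = 1 ∧ k = 8 then (1:ℝ) else 0) +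
  (if i = 2 ∧ j = 5 ∧ k = 6 then t else 0) +
  (if i = 4 ∧ j = 1 ∧ k = 7 then t else 0) +
  (if i = 0 ∧ j = 3 ∧ k = 8 then t else 0)

/-- The (antisymmetric) structure constants of `μ_t`. -/
def muC (t : ℝ) (i j k : Fin 9) : ℝ := muHalf t i j k - muHalf t j i k

/-- The two-step nilpotent Lie bracket `μ_t` on `ℝ⁹`. -/
def mu (t : ℝ) (X Y : Fin 9 → ℝ) : Fin 9 → ℝ :=
  fun k => ∑ i, ∑ j, X i * Y j * muC t i j k

/-- Structure constants of `μ̃_t`: those of `μ_t` plus `μ̃_t(e₁,e₂)=e₇`. -/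
def muTildeHalf (t : ℝ) (i j k : Fin 9) : ℝ :=
  muHalf t i j k + (if i = 0 ∧ j = 1 ∧ k = 6 then (1:ℝ) else 0)

def muTildeC (t : ℝ) (i j k : Fin 9) : ℝ := muTildeHalf t i j k - muTildeHalf t j i k

/-- The two-step nilpotent Lie bracket `μ̃_t` on `ℝ⁹`. -/
def muTilde (t : ℝ) (X Y : Fin 9 → ℝ) : Fin 9 → ℝ :=
  fun k => ∑ i, ∑ j, X i * Y j * muTildeC t i j k

/-- Structure constants of `μ̄_t`: those of `μ̃_t` plus `μ̄_t(e₃,e₄)=e₈`. -/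
def muBarHalf (t : ℝ) (i j k : Fin 9) : ℝ :=
  muTildeHalf t i j k + (if i = 2 ∧ j = 3 ∧ k = 7 then (1:ℝ) else 0)

def muBarC (t : ℝ) (i j k : Fin 9) : ℝ := muBarHalf t i j k - muBarHalf t j i k

/-- The two-step nilpotent Lie bracket `μ̄_t` on `ℝ⁹`. -/
def muBar (t : ℝ) (X Y : Fin 9 → ℝ) : Fin 9 → ℝ :=
  fun k => ∑ i, ∑ j, X i * Y j * muBarC t i j k

/-- The space of (skew-symmetric bilinear) bracket candidates on `ℝ⁹`,
represented as bare functions. -/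
abbrev NilBracket := (Fin 9 → ℝ) → (Fin 9 → ℝ) → Fin 9 → ℝ

/-- The Ricci operator of `(ℝ⁹, ν)` w.r.t. the canonical inner product, as a matrix in the
canonical basis:
`⟨Ric_ν X, Y⟩ = -(1/2)∑ᵢⱼ⟨ν(X,eᵢ),eⱼ⟩⟨ν(Y,eᵢ),eⱼ⟩ + (1/4)∑ᵢⱼ⟨ν(eᵢ,eⱼ),X⟩⟨ν(eᵢ,eⱼ),Y⟩`. -/
def ric (ν : NilBracket) : Matrix (Fin 9) (Fin 9) ℝ :=
  fun a b =>
    -(1/2) * (∑ i, ∑ j, ν (e a) (e i) j * ν (e b) (e i) j)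
    + (1/4) * (∑ i, ∑ j, ν (e i) (e j) a * ν (e i) (e j) b)

/-- `D` is a derivation of the algebra `(ℝ⁹, ν)`. -/
def IsDerivation (ν : NilBracket) (D : Matrix (Fin 9) (Fin 9) ℝ) : Prop :=
  ∀ X Y : Fin 9 → ℝ, D.mulVec (ν X Y) = ν (D.mulVec X) Y + ν X (D.mulVec Y)

/-- The basis `e₁,…,e₆` of `v = span(e₁,…,e₆) ⊆ ℝ⁹`, indexed by `Fin 6`. -/
def E (a : Fin 6) : Fin 9 → ℝ := e (Fin.castLE (by norm_num) a)

/-- The skew-symmetric 6×6 matrix `J_ν(w)`, `w = x e₇ + y e₈ + z e₉`, defined by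
`⟨J_ν(w) v₁, v₂⟩ = ⟨ν(v₁,v₂), w⟩` for `v₁,v₂ ∈ span(e₁,…,e₆)`. -/
def Jmat (ν : NilBracket) (x y z : ℝ) : Matrix (Fin 6) (Fin 6) ℝ :=
  fun a b => ν (E b) (E a) 6 * x + ν (E b) (E a) 7 * y + ν (E b) (E a) 8 * z

/-- The `GL₉(ℝ)` action on brackets: `(g·ν)(X,Y) = g ν(g⁻¹X, g⁻¹Y)`. -/
def act (g : Matrix (Fin 9) (Fin 9) ℝ) (ν : NilBracket) : NilBracket :=
  fun X Y => g.mulVec (ν (g⁻¹.mulVec X) (g⁻¹.mulVec Y))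

/-- The algebras `(ℝ⁹, ν)` and `(ℝ⁹, ν')` are isomorphic:
there is `g ∈ GL₉(ℝ)` with `g ν(X,Y) = ν'(gX, gY)` for all `X, Y`. -/
def LieIso (ν ν' : NilBracket) : Prop :=
  ∃ g : Matrix (Fin 9) (Fin 9) ℝ, IsUnit g ∧
    ∀ X Y : Fin 9 → ℝ, g.mulVec (ν X Y) = ν' (g.mulVec X) (g.mulVec Y)

/-!
The bracket `μ_t` maps `V × V` into `Z`, where `V = span(e₁,…,e₆)` and `Z = span(e₇,e₈,e₉)`,
so the grading operator `D = diag(1,…,1,2,2,2)` is a derivation. Each `eᵢ ∈ V` occurs in exactly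
two brackets, with coefficients `1` and `t`, and each `e_k ∈ Z` is hit by exactly two, with the same
coefficients; no two distinct basis vectors share a bracket pattern. Hence `Ric_{μ_t}` is diagonal,
equal to `-(1+t²)/2` on `V` and `(1+t²)/2` on `Z`, that is
`Ric_{μ_t} = -3(1+t²)/2 · I + (1+t²) D`.
-/

def structBracket {ι : Type*} [Fintype ι] (C : ι → ι → ι → ℝ) (X Y : ι → ℝ) : ι → ℝ :=
  fun k => ∑ i, ∑ j, X i * Y j * C i j k

theorem mu_eq_structBracket (t : ℝ) : mu t = structBracket (muC t) := rfl

theorem diagonal_mulVec_structBracket {ι : Type*} [Fintype ι] [DecidableEq ι]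
    (C : ι → ι → ι → ℝ) (w : ι → ℝ) (hw : ∀ i j k, C i j k ≠ 0 → w k = w i + w j)
    (X Y : ι → ℝ) :
    diagonal w *ᵥ structBracket C X Y =
      structBracket C (diagonal w *ᵥ X) Y + structBracket C X (diagonal w *ᵥ Y) := by
  ext k
  simp only [mulVec_diagonal, structBracket, Pi.add_apply, Finset.mul_sum,
    ← Finset.sum_add_distrib]
  refine Finset.sum_congr rfl fun i _ => Finset.sum_congr rfl fun j _ => ?_
  by_cases h : C i j k = 0
  · simp [h]
  · rw [hw i j k h]; ring

theorem ric_structBracket_apply (C : Fin 9 → Fin 9 → Fin 9 → ℝ) (a b : Fin 9) :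
    ric (structBracket C) a b =
      -(1/2) * (∑ i, ∑ j, C a i j * C b i j) + (1/4) * (∑ i, ∑ j, C i j a * C i j b) := by
  simp [ric, structBracket, e, Pi.single_apply]

def gradingWeight (i : Fin 9) : ℝ := if (i : ℕ) < 6 then 1 else 2

theorem index_bounds_of_muHalf_ne_zero (t : ℝ) {i j k : Fin 9} (h : muHalf t i j k ≠ 0) :
    (i : ℕ) < 6 ∧ (j : ℕ) < 6 ∧ 6 ≤ (k : ℕ) := by
  contrapose! h
  simp only [muHalf, Fin.ext_iff]
  rw [if_neg (by omega), if_neg (by omega), if_neg (by omega), if_neg (by omega),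
    if_neg (by omega), if_neg (by omega)]
  norm_num

theorem gradingWeight_of_muC_ne_zero (t : ℝ) {i j k : Fin 9} (h : muC t i j k ≠ 0) :
    gradingWeight k = gradingWeight i + gradingWeight j := by
  have hHalf : muHalf t i j k ≠ 0 ∨ muHalf t j i k ≠ 0 := by
    by_contra! h'
    simp [muC, h'.1, h'.2] at h
  rcases hHalf with h | h <;> obtain ⟨hi, hj, hk⟩ := index_bounds_of_muHalf_ne_zero t h <;>
    simp only [gradingWeight, if_pos hi, if_pos hj, if_neg hk.not_gt] <;> norm_num

theorem isDerivation_mu_diagonal_gradingWeight (t s : ℝ) :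
    IsDerivation (mu t) (diagonal fun a => s * gradingWeight a) :=
  diagonal_mulVec_structBracket _ _ fun i j k h => by
    rw [gradingWeight_of_muC_ne_zero t h]; ring

theorem sum_muC_mul_muC_left (t : ℝ) (a b : Fin 9) :
    ∑ i, ∑ j, muC t a i j * muC t b i j = if a = b ∧ (a : ℕ) < 6 then 1 + t^2 else 0 := by
  fin_cases a <;> fin_cases b <;> simp [Fin.sum_univ_succ, muC, muHalf] <;> ring

theorem sum_muC_mul_muC_right (t : ℝ) (a b : Fin 9) :
    ∑ i, ∑ j, muC t i j a * muC t i j b = if a = b ∧ 6 ≤ (a : ℕ) then 2 * (1 + t^2) else 0 := by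
  fin_cases a <;> fin_cases b <;> simp [Fin.sum_univ_succ, muC, muHalf] <;> ring

theorem ric_mu (t : ℝ) :
    ric (mu t) = (-(3 * (1 + t^2) / 2)) • 1 + diagonal fun a => (1 + t^2) * gradingWeight a := by
  ext a b
  rw [mu_eq_structBracket, ric_structBracket_apply, sum_muC_mul_muC_left, sum_muC_mul_muC_right]
  by_cases hab : a = b
  · subst hab
    simp only [gradingWeight, Matrix.add_apply, Matrix.smul_apply, one_apply_eq,
      diagonal_apply_eq, smul_eq_mul, true_and]
    split_ifs <;> first | omega | ring
  · simp [hab]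

/-- For every `t ∈ ℝ`, the canonical inner product is a nilsoliton metric on
`n_t = (ℝ⁹, μ_t)`: there are `c ∈ ℝ` and a derivation `D` of `(ℝ⁹, μ_t)` with
`Ric_{μ_t} = c·I + D`. -/
theorem statement0 (t : ℝ) :
    ∃ (c : ℝ) (D : Matrix (Fin 9) (Fin 9) ℝ), IsDerivation (mu t) D ∧
      ric (mu t) = c • (1 : Matrix (Fin 9) (Fin 9) ℝ) + D :=
  ⟨_, _, isDerivation_mu_diagonal_gradingWeight t (1 + t^2), ric_mu t⟩
end
end

section
/- For every t ∈ ℝ and all x,y,z ∈ ℝ, the trace of the fourth power of J_{μ_t}(x·e₇ + y·e₈ + z·e₉) equals tr(J_{μ_t}(w)⁴) = 2(1+t⁴)(x⁴+y⁴+z⁴) + 8t²(x²y² + y²z² + z²x²). -/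
open Matrix Finset Real Filter

noncomputable section

lemma mu_e_e (t : ℝ) (i j : Fin 9) : mu t (e i) (e j) = muC t i j := by
  ext k
  simp [mu, e, Pi.single_apply]

lemma Jmat_mu (t x y z : ℝ) :
    Jmat (mu t) x y z =
      !![0,    0,    0,    -t*z, 0,   -y;
         0,    0,    z,    0,    t*y, 0;
         0,    -z,   0,    0,    0,   -t*x;
         t*z,  0,    0,    0,    x,   0;
         0,    -t*y, 0,    -x,   0,   0;
         y,    0,    t*x,  0,    0,   0] := by
  ext a b
  fin_cases a <;> fin_cases b <;> simp [Jmat, E, mu_e_e, muC, muHalf]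

/-- `tr(J_{μ_t}(x e₇+y e₈+z e₉)⁴) = 2(1+t⁴)(x⁴+y⁴+z⁴) + 8t²(x²y²+y²z²+z²x²)`. -/
theorem statement4 (t x y z : ℝ) :
    Matrix.trace ((Jmat (mu t) x y z)^4)
      = 2*(1+t^4)*(x^4+y^4+z^4) + 8*t^2*(x^2*y^2 + y^2*z^2 + z^2*x^2) := by
  rw [Jmat_mu]
  simp only [trace, diag_apply, pow_succ, pow_zero, Matrix.one_mul, mul_apply, Fin.sum_univ_six,
    of_apply, cons_val', Matrix.cons_val, cons_val_fin_one]
  ring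
end
end

section
/- For every t ∈ ℝ and all x,y,z ∈ ℝ, the determinant of the 6×6 matrix J_{μ̃_t}(x·e₇ + y·e₈ + z·e₉) equals (t·x³ − (t³+1)·xyz)² (equivalently, the Pfaffian form of ñ_t = (ℝ⁹, μ̃_t) is f_{μ̃_t}(x,y,z) = t·x³ − (t³+1)·xyz up to sign). -/
open Matrix Finset Real Filter

noncomputable section

/-! `μ̃_t` only brackets `e₁, e₃, e₅` with `e₂, e₄, e₆`, so in the basis `(e₁, e₃, e₅, e₂, e₄, e₆)`
the matrix `J_{μ̃_t}(w)` is block anti-diagonal, `[[0, A], [-Aᵀ, 0]]` with `A` a `3 × 3` matrix linear in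
`w`. Such a matrix has determinant `(det A)²`, and `det A = t x³ - (t³ + 1) x y z` is the Pfaffian. -/

theorem Matrix.det_fromBlocks_zero_one_neg_one {n R : Type*} [Fintype n] [DecidableEq n]
    [CommRing R] : (fromBlocks 0 1 (-1) 0 : Matrix (n ⊕ n) (n ⊕ n) R).det = 1 := by
  have h : (fromBlocks 0 1 (-1) 0 : Matrix (n ⊕ n) (n ⊕ n) R) =
      fromBlocks 1 1 0 1 * fromBlocks 1 0 (-1) 1 * fromBlocks 1 1 0 1 := by
    simp [fromBlocks_multiply]
  rw [h, det_mul, det_mul, det_fromBlocks_zero₂₁, det_fromBlocks_zero₁₂]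
  simp

theorem Matrix.det_fromBlocks_zero_neg_transpose {n R : Type*} [Fintype n] [DecidableEq n]
    [CommRing R] (A : Matrix n n R) : (fromBlocks 0 A (-Aᵀ) 0).det = A.det ^ 2 := by
  have h : fromBlocks 0 A (-Aᵀ) 0 =
      fromBlocks A 0 0 1 * fromBlocks 0 1 (-1) 0 * fromBlocks Aᵀ 0 0 1 := by
    simp [fromBlocks_multiply]
  rw [h, det_mul, det_mul, det_fromBlocks_zero₂₁, det_fromBlocks_zero₂₁,
    det_fromBlocks_zero_one_neg_one, det_transpose, det_one]
  ring

def evenOddEquiv : Fin 3 ⊕ Fin 3 ≃ Fin 6 where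
  toFun := Sum.elim (fun i => ⟨2 * i, by omega⟩) (fun i => ⟨2 * i + 1, by omega⟩)
  invFun k := if k.val % 2 = 0 then .inl ⟨k / 2, by omega⟩ else .inr ⟨k / 2, by omega⟩
  left_inv := by decide
  right_inv := by decide

lemma muTilde_e_e (t : ℝ) (i j k : Fin 9) : muTilde t (e i) (e j) k = muTildeC t i j k := by
  simp [muTilde, e, Pi.single_apply, ite_mul]

def muTildeBlock (t x y z : ℝ) : Matrix (Fin 3) (Fin 3) ℝ :=
  !![-x, -(t * z), -y; -z, 0, -(t * x); -(t * y), -x, 0]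

lemma Jmat_muTilde_submatrix (t x y z : ℝ) :
    (Jmat (muTilde t) x y z).submatrix evenOddEquiv evenOddEquiv =
      fromBlocks 0 (muTildeBlock t x y z) (-(muTildeBlock t x y z)ᵀ) 0 := by
  ext (i | i) (j | j) <;> fin_cases i <;> fin_cases j <;>
    simp [Jmat, E, evenOddEquiv, muTilde_e_e, muTildeC, muTildeHalf, muHalf, muTildeBlock]

lemma det_muTildeBlock (t x y z : ℝ) :
    (muTildeBlock t x y z).det = t * x ^ 3 - (t ^ 3 + 1) * (x * y * z) := by
  rw [muTildeBlock, det_fin_three]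
  simp only [of_apply, cons_val', cons_val_zero, cons_val_one, cons_val_fin_one, Matrix.cons_val]
  ring

/-- `det J_{μ̃_t}(x e₇ + y e₈ + z e₉) = (t x³ - (t³+1) xyz)²`. -/
theorem statement9 (t x y z : ℝ) :
    (Jmat (muTilde t) x y z).det = (t*x^3 - (t^3+1)*(x*y*z))^2 := by
  rw [← det_submatrix_equiv_self evenOddEquiv, Jmat_muTilde_submatrix,
    det_fromBlocks_zero_neg_transpose, det_muTildeBlock]
end
end

section
/- For every t ∈ (1,∞), the Lie algebras n_t = (ℝ⁹, μ_t) and ñ_t = (ℝ⁹, μ̃_t) are not isomorphic. -/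
open Matrix Finset Real Filter

noncomputable section

/-!
An isomorphism `g : (ℝ⁹, μ_t) → (ℝ⁹, μ̃_t)` maps `𝔷 = span(e₇, e₈, e₉)` into itself, so
`φ ↦ φ ∘ g` carries covectors `φ` on `𝔷` for which the 2-form `φ ∘ μ̃_t` on `ℝ⁹ / 𝔷` is degenerate
to covectors for which `φ ∘ μ_t` is degenerate. In the coordinates `φ = (x, y, z)`, the Pfaffian of
`φ ∘ μ_t` is `±(1 + t³)xyz`, so for `t ≠ 0, -1` its degenerate covectors lie on the three
coordinate planes. The Pfaffian of `φ ∘ μ̃_t` is `±x((1 + t³)yz - tx²)`, which vanishes along the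
conic `φ_s = (s(1 + t³), -ts², -(1 + t³))`; the kernel of `φ_s ∘ μ̃_t` contains
`X_s = s(1 + t³)e₁ + s²e₃ + t(1 + t³)e₅ ∉ 𝔷`. So for every `s` one of the three coordinates of
`φ_s ∘ g`, each a quadratic in `s`, vanishes; hence one of them vanishes identically, and then
`g` kills one of `e₇, e₈, e₉`.
-/

open Polynomial in
theorem exists_quadratic_eq_zero_of_forall_prod_eq_zero {R ι : Type*} [CommRing R] [IsDomain R]
    [Infinite R] {S : Finset ι} {a b c : ι → R}
    (h : ∀ s, ∏ k ∈ S, (a k * s ^ 2 + b k * s + c k) = 0) :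
    ∃ k ∈ S, a k = 0 ∧ b k = 0 ∧ c k = 0 := by
  set p : ι → R[X] := fun k => C (a k) * X ^ 2 + C (b k) * X + C (c k)
  have hp : ∏ k ∈ S, p k = 0 := Polynomial.funext fun s => by simpa [p, eval_prod] using h s
  obtain ⟨k, hk, hpk⟩ := Finset.prod_eq_zero_iff.mp hp
  refine ⟨k, hk, ?_, ?_, ?_⟩
  · simpa [p] using congrArg (coeff · 2) hpk
  · simpa [p] using congrArg (coeff · 1) hpk
  · simpa [p] using congrArg (coeff · 0) hpk

/-- `v ∈ 𝔷 = span(e₇, e₈, e₉)`, the derived algebra of both `μ_t` and `μ̃_t`. -/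
def IsCentral (v : Fin 9 → ℝ) : Prop := ∀ i : Fin 9, i < 6 → v i = 0

lemma isCentral_e {c : Fin 9} (hc : 6 ≤ c) : IsCentral (e c) :=
  fun _ hi => Pi.single_eq_of_ne (hi.trans_le hc).ne 1

lemma IsCentral.eq_zero {v : Fin 9 → ℝ} (hv : IsCentral v) (h6 : v 6 = 0) (h7 : v 7 = 0)
    (h8 : v 8 = 0) : v = 0 := by
  ext i
  fin_cases i
  all_goals first
    | exact hv _ (by decide)
    | assumption

lemma IsCentral.dotProduct_eq {v : Fin 9 → ℝ} (hv : IsCentral v) (φ : Fin 9 → ℝ) :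
    φ ⬝ᵥ v = φ 6 * v 6 + φ 7 * v 7 + φ 8 * v 8 := by
  simp [dotProduct, Fin.sum_univ_succ, hv 0 (by decide), hv 1 (by decide), hv 2 (by decide),
    hv 3 (by decide), hv 4 (by decide), hv 5 (by decide), add_assoc]

lemma mu_eq (t : ℝ) (X Y : Fin 9 → ℝ) :
    mu t X Y = ![0, 0, 0, 0, 0, 0, X 4 * Y 3 - X 3 * Y 4 + t * (X 2 * Y 5 - X 5 * Y 2),
      X 0 * Y 5 - X 5 * Y 0 + t * (X 4 * Y 1 - X 1 * Y 4),
      X 2 * Y 1 - X 1 * Y 2 + t * (X 0 * Y 3 - X 3 * Y 0)] := by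
  ext k
  fin_cases k <;> simp [mu, muC, muHalf, Fin.sum_univ_succ] <;> ring

lemma muTilde_eq_mu_add (t : ℝ) (X Y : Fin 9 → ℝ) :
    muTilde t X Y = mu t X Y + (X 0 * Y 1 - X 1 * Y 0) • e 6 := by
  ext k
  fin_cases k <;> simp [muTilde, muTildeC, muTildeHalf, mu, muC, muHalf, e, Fin.sum_univ_succ]
  ring

lemma isCentral_mu (t : ℝ) (X Y : Fin 9 → ℝ) : IsCentral (mu t X Y) := by
  intro i hi
  fin_cases i <;> simp_all [mu_eq]

lemma isCentral_muTilde (t : ℝ) (X Y : Fin 9 → ℝ) : IsCentral (muTilde t X Y) := by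
  intro i hi
  rw [muTilde_eq_mu_add, Pi.add_apply, isCentral_mu t X Y i hi, Pi.smul_apply,
    isCentral_e le_rfl i hi, smul_zero, add_zero]

lemma exists_mu_eq_e (t : ℝ) {c : Fin 9} (hc : 6 ≤ c) : ∃ a b, mu t (e a) (e b) = e c := by
  have h6 : mu t (e 4) (e 3) = e 6 := by ext k; fin_cases k <;> simp [mu_eq, e]
  have h7 : mu t (e 0) (e 5) = e 7 := by ext k; fin_cases k <;> simp [mu_eq, e]
  have h8 : mu t (e 2) (e 1) = e 8 := by ext k; fin_cases k <;> simp [mu_eq, e]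
  fin_cases c
  iterate 6 exact absurd hc (by decide)
  exacts [⟨4, 3, h6⟩, ⟨0, 5, h7⟩, ⟨2, 1, h8⟩]

lemma isCentral_mulVec {t : ℝ} {g : Matrix (Fin 9) (Fin 9) ℝ}
    (hgμ : ∀ X Y, g *ᵥ mu t X Y = muTilde t (g *ᵥ X) (g *ᵥ Y)) {w : Fin 9 → ℝ}
    (hw : IsCentral w) : IsCentral (g *ᵥ w) := by
  have hcol : ∀ i c : Fin 9, i < 6 → 6 ≤ c → g i c = 0 := by
    intro i c hi hc
    obtain ⟨a, b, hab⟩ := exists_mu_eq_e t hc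
    have h := isCentral_muTilde t (g *ᵥ e a) (g *ᵥ e b) i hi
    rwa [← hgμ, hab, e, mulVec_single_one, col_apply] at h
  intro i hi
  simp only [mulVec, dotProduct]
  refine Finset.sum_eq_zero fun j _ => ?_
  rcases lt_or_ge j 6 with hj | hj
  · rw [hw j hj, mul_zero]
  · rw [hcol i j hi hj, zero_mul]

lemma isCentral_of_dotProduct_mu_eq_zero {t : ℝ} (ht : t ≠ 0) (ht3 : 1 + t ^ 3 ≠ 0)
    {φ w : Fin 9 → ℝ} (hφ : ∀ k, 6 ≤ k → φ k ≠ 0) (h : ∀ Y, φ ⬝ᵥ mu t w Y = 0) :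
    IsCentral w := by
  have hx := hφ 6 (by decide)
  have hy := hφ 7 (by decide)
  have hz := hφ 8 (by decide)
  have hcoord : ∀ j, φ 6 * mu t w (e j) 6 + φ 7 * mu t w (e j) 7 + φ 8 * mu t w (e j) 8 = 0 :=
    fun j => (isCentral_mu t w (e j)).dotProduct_eq φ ▸ h (e j)
  have E0 : φ 7 * w 5 = -(φ 8 * (t * w 3)) := by simpa [mu_eq, e, neg_add_eq_zero] using hcoord 0
  have E1 : φ 7 * (t * w 4) + φ 8 * w 2 = 0 := by simpa [mu_eq, e] using hcoord 1
  have E2 : φ 6 * (t * w 5) = -(φ 8 * w 1) := by simpa [mu_eq, e, neg_add_eq_zero] using hcoord 2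
  have E3 : φ 6 * w 4 + φ 8 * (t * w 0) = 0 := by simpa [mu_eq, e] using hcoord 3
  have E4 : φ 6 * w 3 = -(φ 7 * (t * w 1)) := by simpa [mu_eq, e, neg_add_eq_zero] using hcoord 4
  have E5 : φ 6 * (t * w 2) + φ 7 * w 0 = 0 := by simpa [mu_eq, e] using hcoord 5
  have hw0 : w 0 = 0 := eq_zero_of_ne_zero_of_mul_left_eq_zero
    (mul_ne_zero (mul_ne_zero ht3 hy) hz)
    (by linear_combination φ 8 * E5 - t * φ 6 * E1 + t ^ 2 * φ 7 * E3)
  have hw5 : w 5 = 0 := eq_zero_of_ne_zero_of_mul_left_eq_zero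
    (mul_ne_zero (mul_ne_zero ht3 hx) hy)
    (by linear_combination φ 6 * E0 - t * φ 8 * E4 + t ^ 2 * φ 7 * E2)
  have hw1 : w 1 = 0 := eq_zero_of_ne_zero_of_mul_left_eq_zero hz
    (by linear_combination E2 - t * φ 6 * hw5)
  have hw2 : w 2 = 0 := eq_zero_of_ne_zero_of_mul_left_eq_zero (mul_ne_zero ht hx)
    (by linear_combination E5 - φ 7 * hw0)
  have hw3 : w 3 = 0 := eq_zero_of_ne_zero_of_mul_left_eq_zero (mul_ne_zero ht hz)
    (by linear_combination E0 - φ 7 * hw5)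
  have hw4 : w 4 = 0 := eq_zero_of_ne_zero_of_mul_left_eq_zero hx
    (by linear_combination E3 - t * φ 8 * hw0)
  intro i hi
  fin_cases i
  all_goals first
    | assumption
    | exact absurd hi (by decide)

def conicCovector (t s : ℝ) : Fin 9 → ℝ :=
  (s * (1 + t ^ 3)) • e 6 - (t * s ^ 2) • e 7 - (1 + t ^ 3) • e 8

def conicKernelVector (t s : ℝ) : Fin 9 → ℝ :=
  (s * (1 + t ^ 3)) • e 0 + s ^ 2 • e 2 + (t * (1 + t ^ 3)) • e 4

lemma conicCovector_dotProduct_muTilde_conicKernelVector (t s : ℝ) (Y : Fin 9 → ℝ) :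
    conicCovector t s ⬝ᵥ muTilde t (conicKernelVector t s) Y = 0 := by
  rw [(isCentral_muTilde t _ Y).dotProduct_eq, muTilde_eq_mu_add]
  simp only [mu_eq, conicCovector, conicKernelVector, e, Pi.add_apply, Pi.sub_apply, Pi.smul_apply,
    smul_eq_mul, Pi.single_apply, Matrix.cons_val, Fin.reduceEq, if_true, if_false]
  ring

lemma conicCovector_vecMul_apply (t s : ℝ) (g : Matrix (Fin 9) (Fin 9) ℝ) (k : Fin 9) :
    (conicCovector t s ᵥ* g) k
      = -(t * g 7 k) * s ^ 2 + (1 + t ^ 3) * g 6 k * s + -((1 + t ^ 3) * g 8 k) := by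
  simp only [conicCovector, e, sub_vecMul, smul_vecMul, single_vecMul, one_smul, Pi.sub_apply,
    Pi.smul_apply, row_apply, smul_eq_mul]
  ring

lemma exists_conicCovector_vecMul_eq_zero {t : ℝ} (ht : t ≠ 0) (ht3 : 1 + t ^ 3 ≠ 0)
    {g : Matrix (Fin 9) (Fin 9) ℝ} (hg : IsUnit g)
    (hgμ : ∀ X Y, g *ᵥ mu t X Y = muTilde t (g *ᵥ X) (g *ᵥ Y)) (s : ℝ) :
    ∃ k ∈ Finset.Ici (6 : Fin 9), (conicCovector t s ᵥ* g) k = 0 := by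
  by_contra! hφ
  set w := g⁻¹ *ᵥ conicKernelVector t s
  have hgw : g *ᵥ w = conicKernelVector t s := by
    rw [mulVec_mulVec, mul_nonsing_inv g ((isUnit_iff_isUnit_det g).mp hg), one_mulVec]
  have hw : IsCentral w :=
    isCentral_of_dotProduct_mu_eq_zero ht ht3 (fun k hk => hφ k (Finset.mem_Ici.mpr hk))
      fun Y => by
        rw [← dotProduct_mulVec, hgμ, hgw]
        exact conicCovector_dotProduct_muTilde_conicKernelVector t s _
  have h4 := isCentral_mulVec hgμ hw 4 (by decide)
  rw [hgw] at h4
  simp [conicKernelVector, e, ht, ht3] at h4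

/-- for `t ∈ (1,∞)`, `n_t = (ℝ⁹, μ_t)` and `ñ_t = (ℝ⁹, μ̃_t)` are not
isomorphic Lie algebras. -/
theorem statement11 (t : ℝ) (ht : t ∈ Set.Ioi (1:ℝ)) :
    ¬ LieIso (mu t) (muTilde t) := by
  rintro ⟨g, hg, hgμ⟩
  have ht0 : 0 < t := zero_lt_one.trans ht
  have ht3 : 1 + t ^ 3 ≠ 0 := by positivity
  obtain ⟨K, hK, h7, h6, h8⟩ := exists_quadratic_eq_zero_of_forall_prod_eq_zero fun s => by
    obtain ⟨k, hk, hk0⟩ := exists_conicCovector_vecMul_eq_zero ht0.ne' ht3 hg hgμ s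
    exact Finset.prod_eq_zero hk ((conicCovector_vecMul_apply t s g k).symm.trans hk0)
  have hcol : g *ᵥ e K = 0 :=
    (isCentral_mulVec hgμ (isCentral_e (Finset.mem_Ici.mp hK))).eq_zero
      (by simpa [e, ht3] using h6) (by simpa [e, ht0.ne'] using h7) (by simpa [e, ht3] using h8)
  have hK0 : e K = 0 := mulVec_injective_iff_isUnit.mpr hg (hcol.trans (mulVec_zero g).symm)
  simpa [e] using congrFun hK0 K
end
end

section
/- Let A = diag(-1,-1,1,1,0,0,1,-1,0) and for s ∈ ℝ let φ_s = exp(-sA) = diag(e^s, e^s, e^{-s}, e^{-s}, 1, 1, e^{-s}, e^s, 1) ∈ GL₉(ℝ). Then for every t ∈ ℝ, the brackets φ_s·μ̃_t converge to μ_t as s → ∞ (convergence in the finite-dimensional space of skew-symmetric bilinear maps ℝ⁹×ℝ⁹→ℝ⁹); in particular μ_t lies in the closure of the GL₉(ℝ)-orbit of μ̃_t under the action (g·μ)(X,Y) = g μ(g⁻¹X, g⁻¹Y). -/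
/-!
All the matrices involved are diagonal, so the action only rescales structure constants:
`exp(-sA)` multiplies the constant `c_{ij}^k` of `ν(eᵢ, eⱼ) = ∑ₖ c_{ij}^k eₖ` by
`exp(s (aᵢ + aⱼ - aₖ))`, where `a = diag A`. Every bracket of `μ_t` satisfies `aᵢ + aⱼ = aₖ`
(`A` is a derivation of `μ_t`), so `φ_s` fixes `μ_t`, while the additional bracket
`μ̃_t(e₁,e₂) = e₇` has `a₁ + a₂ - a₇ = -3` and is damped by `exp(-3s) → 0`.
-/

open Matrix Finset Real Filter

noncomputable section

/-- `φ_s = exp(-sA)` for `A = diag(-1,-1,1,1,0,0,1,-1,0)`. -/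
def phi (s : ℝ) : Matrix (Fin 9) (Fin 9) ℝ :=
  Matrix.diagonal ![Real.exp s, Real.exp s, Real.exp (-s), Real.exp (-s), 1, 1,
    Real.exp (-s), Real.exp s, 1]


def bracketOfConst {n : ℕ} (C : Fin n → Fin n → Fin n → ℝ) (X Y : Fin n → ℝ) : Fin n → ℝ :=
  fun k => ∑ i, ∑ j, X i * Y j * C i j k

lemma tendsto_bracketOfConst {n : ℕ} {α : Type*} {l : Filter α}
    {C : α → Fin n → Fin n → Fin n → ℝ} {C₀ : Fin n → Fin n → Fin n → ℝ}
    (h : ∀ i j k, Tendsto (fun a => C a i j k) l (nhds (C₀ i j k))) :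
    Tendsto (fun a => bracketOfConst (C a)) l (nhds (bracketOfConst C₀)) := by
  refine tendsto_pi_nhds.2 fun X => tendsto_pi_nhds.2 fun Y => tendsto_pi_nhds.2 fun k => ?_
  exact tendsto_finsetSum _ fun i _ => tendsto_finsetSum _ fun j _ => (h i j k).const_mul _

lemma inv_diagonal_of_ne_zero {n : Type*} [Fintype n] [DecidableEq n] {d : n → ℝ}
    (hd : ∀ i, d i ≠ 0) : (diagonal d)⁻¹ = diagonal d⁻¹ := by
  refine inv_eq_right_inv ?_
  rw [diagonal_mul_diagonal, ← diagonal_one]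
  exact congrArg diagonal (funext fun i => mul_inv_cancel₀ (hd i))

lemma act_diagonal_bracketOfConst {d : Fin 9 → ℝ} (hd : ∀ i, d i ≠ 0)
    (C : Fin 9 → Fin 9 → Fin 9 → ℝ) :
    act (diagonal d) (bracketOfConst C) =
      bracketOfConst fun i j k => d k / (d i * d j) * C i j k := by
  funext X Y k
  simp only [act, inv_diagonal_of_ne_zero hd, mulVec_diagonal, bracketOfConst, Finset.mul_sum,
    Pi.inv_apply]
  refine Finset.sum_congr rfl fun i _ => Finset.sum_congr rfl fun j _ => ?_
  field_simp [hd i, hd j]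

/-- The diagonal of `A`, so that `phi s = exp (-s • diagonal weight)`. -/
def weight : Fin 9 → ℝ := ![-1, -1, 1, 1, 0, 0, 1, -1, 0]

lemma phi_eq_diagonal (s : ℝ) : phi s = diagonal fun i => exp (-(s * weight i)) := by
  unfold phi
  congr 1
  funext i
  fin_cases i <;> simp [weight]

lemma isUnit_phi (s : ℝ) : IsUnit (phi s) := by
  rw [phi_eq_diagonal, isUnit_diagonal]
  exact Pi.isUnit_iff.2 fun i => (exp_pos _).ne'.isUnit

lemma act_phi_bracketOfConst (s : ℝ) (C : Fin 9 → Fin 9 → Fin 9 → ℝ) :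
    act (phi s) (bracketOfConst C) =
      bracketOfConst fun i j k => exp (s * (weight i + weight j - weight k)) * C i j k := by
  rw [phi_eq_diagonal, act_diagonal_bracketOfConst fun i => exp_ne_zero _]
  congr
  funext i j k
  rw [← exp_add, ← exp_sub]
  ring_nf

lemma exp_weight_mul_muC (s t : ℝ) (i j k : Fin 9) :
    exp (s * (weight i + weight j - weight k)) * muC t i j k = muC t i j k := by
  simp +contextual [muC, muHalf, mul_sub, mul_add, mul_ite, weight]

/-- The structure constants of the bracket `(e₁, e₂) ↦ e₇` that `μ̃_t` adds to `μ_t`. -/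
def muTildeExtraC (i j k : Fin 9) : ℝ :=
  (if i = 0 ∧ j = 1 ∧ k = 6 then 1 else 0) - (if j = 0 ∧ i = 1 ∧ k = 6 then 1 else 0)

lemma muTildeC_eq_add (t : ℝ) (i j k : Fin 9) :
    muTildeC t i j k = muC t i j k + muTildeExtraC i j k := by
  simp only [muTildeC, muTildeHalf, muC, muTildeExtraC]
  ring

lemma exp_weight_mul_muTildeExtraC (s : ℝ) (i j k : Fin 9) :
    exp (s * (weight i + weight j - weight k)) * muTildeExtraC i j k =
      exp (-(3 * s)) * muTildeExtraC i j k := by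
  have h : s * (-1 + -1) - s = -(3 * s) := by ring
  simp +contextual [muTildeExtraC, mul_sub, mul_ite, weight, h]

lemma tendsto_act_phi_muTilde (t : ℝ) :
    Tendsto (fun s : ℝ => act (phi s) (muTilde t)) atTop (nhds (mu t)) := by
  have hdecay : Tendsto (fun s : ℝ => exp (-(3 * s))) atTop (nhds 0) :=
    tendsto_exp_atBot.comp (tendsto_neg_atTop_atBot.comp (tendsto_id.const_mul_atTop three_pos))
  change Tendsto (fun s => act (phi s) (bracketOfConst (muTildeC t))) atTop
    (nhds (bracketOfConst (muC t)))
  simp only [act_phi_bracketOfConst]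
  refine tendsto_bracketOfConst fun i j k => ?_
  simp only [muTildeC_eq_add, mul_add, exp_weight_mul_muC, exp_weight_mul_muTildeExtraC]
  simpa using (hdecay.mul_const (muTildeExtraC i j k)).const_add (muC t i j k)

/-- `φ_s·μ̃_t → μ_t` as `s → ∞`; in particular `μ_t` lies in the closure of
the `GL₉(ℝ)`-orbit of `μ̃_t`. -/
theorem statement12 (t : ℝ) :
    Tendsto (fun s : ℝ => act (phi s) (muTilde t)) atTop (nhds (mu t)) ∧
    mu t ∈ closure {ν : NilBracket |
      ∃ g : Matrix (Fin 9) (Fin 9) ℝ, IsUnit g ∧ ν = act g (muTilde t)} :=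
  ⟨tendsto_act_phi_muTilde t, mem_closure_of_tendsto (tendsto_act_phi_muTilde t)
    (Eventually.of_forall fun s => ⟨phi s, isUnit_phi s, rfl⟩)⟩
end
end

section
/- For every t ∈ (1,∞), the zero set Z = {(x,y,z) ∈ ℝ³ : t(x³+y³) − (t³+1)xyz = 0} contains no 2-dimensional linear subspace of ℝ³ (equivalently, the cubic t(x³+y³) − (t³+1)xyz has no real linear factor). -/
open Matrix Finset Real Filter

noncomputable section

/-!
A plane in `ℝ³` meets both coordinate planes `z = 0` and `x = 0` in a nonzero vector. On `z = 0`
the cubic is `t (x³ + y³)`, so the plane contains `(1, -1, 0)`; on `x = 0` it is `t y³`, so the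
plane contains `(0, 0, 1)`. Hence it contains `(1, -1, 1)`, where the cubic equals `t³ + 1 > 0`.
-/

theorem Submodule.exists_ne_zero_mem_and_apply_eq_zero {K V : Type*} [DivisionRing K]
    [AddCommGroup V] [Module K V] (W : Submodule K V) (hW : 1 < Module.finrank K W)
    (f : V →ₗ[K] K) : ∃ v ∈ W, v ≠ 0 ∧ f v = 0 := by
  have : FiniteDimensional K W := Module.finite_of_finrank_pos (one_pos.trans hW)
  obtain ⟨v, hv, hv0⟩ := Submodule.ne_bot_iff _ |>.mp <|
    (f ∘ₗ W.subtype).ker_ne_bot_of_finrank_lt (by rwa [Module.finrank_self])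
  exact ⟨v, v.2, by simpa using hv0, hv⟩

theorem Submodule.mem_of_eq_smul {K V : Type*} [DivisionRing K] [AddCommGroup V] [Module K V]
    {W : Submodule K V} {v x : V} {c : K} (hv : v ∈ W) (hv0 : v ≠ 0) (h : v = c • x) :
    x ∈ W := by
  have hc : c ≠ 0 := by rintro rfl; exact hv0 (by simpa using h)
  exact (W.smul_mem_iff hc).mp (h ▸ hv)

/-- The cubic form `p_t`. -/
def cubic (t : ℝ) (v : Fin 3 → ℝ) : ℝ := t * ((v 0)^3 + (v 1)^3) - (t^3+1) * (v 0 * v 1 * v 2)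

section cubic

variable {t : ℝ} {v : Fin 3 → ℝ}

theorem eq_smul_of_cubic_eq_zero_of_apply_two_eq_zero (ht : t ≠ 0) (hv : cubic t v = 0)
    (h2 : v 2 = 0) : v = v 0 • ![1, -1, 0] := by
  have h1 : v 1 = -v 0 := by
    simp only [cubic, h2, mul_zero, sub_zero, mul_eq_zero, ht, false_or] at hv
    exact (Odd.pow_inj (by decide)).mp (by linear_combination hv : v 1 ^ 3 = (-v 0) ^ 3)
  ext i; fin_cases i <;> simp [h1, h2]

theorem eq_smul_of_cubic_eq_zero_of_apply_zero_eq_zero (ht : t ≠ 0) (hv : cubic t v = 0)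
    (h0 : v 0 = 0) : v = v 2 • ![0, 0, 1] := by
  have h1 : v 1 = 0 := by simpa [cubic, h0, ht] using hv
  ext i; fin_cases i <;> simp [h0, h1]

theorem cubic_one_neg_one_one (t : ℝ) : cubic t (![1, -1, 0] + ![0, 0, 1]) = t ^ 3 + 1 := by
  simp only [cubic, Pi.add_apply, Matrix.cons_val_zero, Matrix.cons_val_one, Matrix.cons_val,
    add_zero, zero_add, one_pow, mul_one, mul_neg, neg_add_rev]
  ring

end cubic

/-- for `t ∈ (1,∞)`, the zero set of `p_t(x,y,z) = t(x³+y³) - (t³+1)xyz`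
contains no 2-dimensional linear subspace of `ℝ³`. -/
theorem statement16 (t : ℝ) (ht : t ∈ Set.Ioi (1:ℝ)) :
    ¬ ∃ W : Submodule ℝ (Fin 3 → ℝ), Module.finrank ℝ W = 2 ∧
      ∀ v ∈ W, t * ((v 0)^3 + (v 1)^3) - (t^3+1) * (v 0 * v 1 * v 2) = 0 := by
  rintro ⟨W, hW, hp⟩
  have ht0 : 0 < t := zero_lt_one.trans ht
  obtain ⟨u, huW, hu_ne, hu2⟩ := W.exists_ne_zero_mem_and_apply_eq_zero (by omega) (.proj 2)
  obtain ⟨w, hwW, hw_ne, hw0⟩ := W.exists_ne_zero_mem_and_apply_eq_zero (by omega) (.proj 0)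
  have h₁ : ![1, -1, 0] ∈ W := Submodule.mem_of_eq_smul huW hu_ne <|
    eq_smul_of_cubic_eq_zero_of_apply_two_eq_zero ht0.ne' (hp u huW) hu2
  have h₂ : ![0, 0, 1] ∈ W := Submodule.mem_of_eq_smul hwW hw_ne <|
    eq_smul_of_cubic_eq_zero_of_apply_zero_eq_zero ht0.ne' (hp w hwW) hw0
  have h := hp _ (W.add_mem h₁ h₂)
  rw [← cubic, cubic_one_neg_one_one] at h
  exact (by positivity : t ^ 3 + 1 ≠ 0) h
end
end

section
/- Let A = diag(0,-2,0,-2,3,1,1,1,-2) and for s ∈ ℝ let ψ_s = exp(-sA) ∈ GL₉(ℝ) (a diagonal matrix with entries e^{0}, e^{2s}, e^{0}, e^{2s}, e^{-3s}, e^{-s}, e^{-s}, e^{-s}, e^{2s}). Then for every t ∈ ℝ, the brackets ψ_s·μ̄_t converge to μ_t as s → ∞ (convergence in the finite-dimensional space of skew-symmetric bilinear maps ℝ⁹×ℝ⁹→ℝ⁹); in particular μ_t lies in the closure of the GL₉(ℝ)-orbit of μ̄_t under the action (g·μ)(X,Y) = g μ(g⁻¹X, g⁻¹Y). -/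
open Matrix Finset Real Filter

noncomputable section

/-- `ψ_s = exp(-sA)` for `A = diag(0,-2,0,-2,3,1,1,1,-2)`. -/
def psi (s : ℝ) : Matrix (Fin 9) (Fin 9) ℝ :=
  Matrix.diagonal ![1, Real.exp (2*s), 1, Real.exp (2*s), Real.exp (-(3*s)),
    Real.exp (-s), Real.exp (-s), Real.exp (-s), Real.exp (2*s)]

/-! Conjugating by `ψ_s = exp(-sA)`, `A = diag(a₁,…,a₉)`, multiplies the structure constant
`c_{ij}^k` by `e^{s(aᵢ + aⱼ - aₖ)}`. The matrix `A` is a derivation of `μ_t`: every bracket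
`μ_t(eᵢ, eⱼ) = c eₖ` has `aᵢ + aⱼ = aₖ`, so `ψ_s` fixes `μ_t`. The two extra brackets of `μ̄_t`
have `aᵢ + aⱼ - aₖ = -3`, so `ψ_s·μ̄_t = μ_t + e^{-3s}(μ̄_t - μ_t) → μ_t`. -/

def bracketOf (C : Fin 9 → Fin 9 → Fin 9 → ℝ) : NilBracket :=
  fun X Y k => ∑ i, ∑ j, X i * Y j * C i j k

lemma continuous_bracketOf : Continuous bracketOf := by
  unfold bracketOf
  fun_prop

lemma act_diagonal_bracketOf {d : Fin 9 → ℝ} (hd : ∀ i, d i ≠ 0)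
    (C : Fin 9 → Fin 9 → Fin 9 → ℝ) :
    act (diagonal d) (bracketOf C) = bracketOf fun i j k => d k / (d i * d j) * C i j k := by
  have hinv : (diagonal d)⁻¹ = diagonal d⁻¹ := by
    refine inv_eq_left_inv ?_
    rw [diagonal_mul_diagonal, ← diagonal_one]
    exact congrArg diagonal (funext fun i => inv_mul_cancel₀ (hd i))
  funext X Y k
  simp only [act, bracketOf, hinv, mulVec_diagonal, Finset.mul_sum, Pi.inv_apply]
  refine Finset.sum_congr rfl fun i _ => Finset.sum_congr rfl fun j _ => ?_
  field_simp

def diagA : Fin 9 → ℤ := ![0, -2, 0, -2, 3, 1, 1, 1, -2]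

def bracketWeight (i j k : Fin 9) : ℤ := diagA i + diagA j - diagA k

lemma bracketWeight_comm (i j k : Fin 9) : bracketWeight i j k = bracketWeight j i k := by
  simp only [bracketWeight, add_comm]

lemma psi_eq_diagonal (s : ℝ) : psi s = diagonal fun i => exp (-(s * diagA i)) := by
  unfold psi
  congr 1
  funext i
  fin_cases i <;> simp [diagA] <;> ring_nf

lemma isUnit_psi (s : ℝ) : IsUnit (psi s) := by
  rw [psi_eq_diagonal, isUnit_diagonal, Pi.isUnit_iff]
  exact fun i => (exp_pos _).ne'.isUnit

lemma act_psi_bracketOf (s : ℝ) (C : Fin 9 → Fin 9 → Fin 9 → ℝ) :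
    act (psi s) (bracketOf C) = bracketOf fun i j k => exp (s * bracketWeight i j k) * C i j k := by
  rw [psi_eq_diagonal, act_diagonal_bracketOf fun i => (exp_pos _).ne']
  congr
  funext i j k
  rw [← exp_add, ← exp_sub, bracketWeight]
  push_cast
  ring_nf

lemma exp_mul_weight_mul {w : ℤ} (c : ℤ) {x : ℝ} (h : w ≠ c → x = 0) (s : ℝ) :
    exp (s * w) * x = exp (s * c) * x := by
  by_cases hw : w = c
  · rw [hw]
  · rw [h hw, mul_zero, mul_zero]

lemma muHalf_eq_zero_of_bracketWeight_ne (t : ℝ) {i j k : Fin 9}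
    (hw : bracketWeight i j k ≠ 0) :
    muHalf t i j k = 0 := by
  unfold muHalf
  split_ifs <;> simp_all [bracketWeight, diagA]

lemma muC_eq_zero_of_bracketWeight_ne (t : ℝ) {i j k : Fin 9} (hw : bracketWeight i j k ≠ 0) :
    muC t i j k = 0 := by
  rw [muC, muHalf_eq_zero_of_bracketWeight_ne t hw,
    muHalf_eq_zero_of_bracketWeight_ne t (bracketWeight_comm i j k ▸ hw), sub_zero]

def extraHalf (i j k : Fin 9) : ℝ :=
  (if i = 0 ∧ j = 1 ∧ k = 6 then (1:ℝ) else 0) + (if i = 2 ∧ j = 3 ∧ k = 7 then (1:ℝ) else 0)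

def extraC (i j k : Fin 9) : ℝ := extraHalf i j k - extraHalf j i k

lemma muBarC_eq_muC_add_extraC (t : ℝ) (i j k : Fin 9) :
    muBarC t i j k = muC t i j k + extraC i j k := by
  simp only [muBarC, muBarHalf, muTildeHalf, muC, extraC, extraHalf]
  ring

lemma extraHalf_eq_zero_of_bracketWeight_ne {i j k : Fin 9} (hw : bracketWeight i j k ≠ -3) :
    extraHalf i j k = 0 := by
  unfold extraHalf
  split_ifs <;> simp_all [bracketWeight, diagA]

lemma extraC_eq_zero_of_bracketWeight_ne {i j k : Fin 9} (hw : bracketWeight i j k ≠ -3) :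
    extraC i j k = 0 := by
  rw [extraC, extraHalf_eq_zero_of_bracketWeight_ne hw,
    extraHalf_eq_zero_of_bracketWeight_ne (bracketWeight_comm i j k ▸ hw), sub_zero]

lemma act_psi_muBar (t s : ℝ) :
    act (psi s) (muBar t) = bracketOf (muC t + exp (-(3 * s)) • extraC) := by
  rw [show muBar t = bracketOf (muBarC t) from rfl, act_psi_bracketOf]
  congr
  funext i j k
  rw [muBarC_eq_muC_add_extraC, mul_add,
    exp_mul_weight_mul 0 (muC_eq_zero_of_bracketWeight_ne t),
    exp_mul_weight_mul (-3) extraC_eq_zero_of_bracketWeight_ne]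
  push_cast
  simp only [mul_zero, exp_zero, one_mul, Pi.add_apply, Pi.smul_apply, smul_eq_mul]
  ring_nf

/-- `ψ_s·μ̄_t → μ_t` as `s → ∞`; in particular `μ_t` lies in the closure of
the `GL₉(ℝ)`-orbit of `μ̄_t`. -/
theorem statement18 (t : ℝ) :
    Tendsto (fun s : ℝ => act (psi s) (muBar t)) atTop (nhds (mu t)) ∧
    mu t ∈ closure {ν : NilBracket |
      ∃ g : Matrix (Fin 9) (Fin 9) ℝ, IsUnit g ∧ ν = act g (muBar t)} := by
  have hexp : Tendsto (fun s : ℝ => exp (-(3 * s))) atTop (nhds 0) :=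
    tendsto_exp_neg_atTop_nhds_zero.comp (tendsto_id.const_mul_atTop three_pos)
  have hlim : Tendsto (fun s : ℝ => act (psi s) (muBar t)) atTop (nhds (mu t)) := by
    have hC := (hexp.smul_const extraC).const_add (muC t)
    rw [zero_smul, add_zero] at hC
    rw [show (fun s => act (psi s) (muBar t)) = _ from funext (act_psi_muBar t)]
    exact (continuous_bracketOf.tendsto (muC t)).comp hC
  exact ⟨hlim, mem_closure_of_tendsto hlim <|
    Eventually.of_forall fun s => ⟨psi s, isUnit_psi s, rfl⟩⟩
end
end
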